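/- arXiv:2203.00966 — 6 statements merged into one kernel-verified Lean document; each statement's English description precedes it below -/
import Mathlib

section
/- Let b : (0,∞) → (0,∞) be differentiable and suppose β := limsup_{x→∞} (x·b'(x)/b(x)) is finite. Then limsup_{x→∞} (log b(x) / log x) ≤ β. -/
open Filter

/-- If `b : (0,∞) → (0,∞)` is differentiable and `β := limsup_{x→∞} x b'(x)/b(x)` is finite,
then `limsup_{x→∞} log b(x) / log x ≤ β`, i.e. for every `ε > 0`, eventually
`log b(x)/log x ≤ β + ε`. -/
theorem stmt0 (b : ℝ → ℝ) (β : ℝ)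
    (hbpos : ∀ x > 0, 0 < b x)
    (hdiff : ∀ x > 0, DifferentiableAt ℝ b x)
    (hbdd : IsBoundedUnder (· ≤ ·) atTop (fun x => x * deriv b x / b x))
    (hβ : limsup (fun x => x * deriv b x / b x) atTop = β) :
    ∀ ε > 0, ∀ᶠ x in atTop, Real.log (b x) / Real.log x ≤ β + ε := by
  intro ε hε
  set c := β + ε / 2 with hc
  have h1 : ∀ᶠ x in atTop, x * deriv b x / b x < c := by
    apply eventually_lt_of_limsup_lt _ hbdd
    rw [hβ, hc]; linarith
  obtain ⟨X₀, hX₀⟩ := eventually_atTop.mp h1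
  set X := max X₀ 2 with hXdef
  have hX1 : (1:ℝ) < X := lt_of_lt_of_le one_lt_two (le_max_right _ _)
  have hX0 : (0:ℝ) < X := lt_trans one_pos hX1
  set g : ℝ → ℝ := fun x => Real.log (b x) - c * Real.log x with hg
  have hgderiv : ∀ x ∈ Set.Ioi X,
      HasDerivAt g ((b x)⁻¹ * deriv b x - c * x⁻¹) x := by
    intro x hx
    have hxX : X < x := hx
    have hx0 : (0:ℝ) < x := lt_trans hX0 hxX
    have hb : HasDerivAt b (deriv b x) x := (hdiff x hx0).hasDerivAt
    have hlogb : HasDerivAt (fun y => Real.log (b y)) ((b x)⁻¹ * deriv b x) x :=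
      (Real.hasDerivAt_log (ne_of_gt (hbpos x hx0))).comp x hb
    have hlogx : HasDerivAt Real.log x⁻¹ x := Real.hasDerivAt_log (ne_of_gt hx0)
    exact hlogb.sub (hlogx.const_mul c)
  have hanti : AntitoneOn g (Set.Ici X) := by
    apply antitoneOn_of_deriv_nonpos (convex_Ici X)
    · intro x hx
      have hx0 : (0:ℝ) < x := lt_of_lt_of_le hX0 hx
      have : DifferentiableAt ℝ g x := by
        have hb : HasDerivAt b (deriv b x) x := (hdiff x hx0).hasDerivAt
        have hlogb : HasDerivAt (fun y => Real.log (b y)) ((b x)⁻¹ * deriv b x) x :=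
          (Real.hasDerivAt_log (ne_of_gt (hbpos x hx0))).comp x hb
        have hlogx : HasDerivAt Real.log x⁻¹ x := Real.hasDerivAt_log (ne_of_gt hx0)
        exact (hlogb.sub (hlogx.const_mul c)).differentiableAt
      exact this.continuousAt.continuousWithinAt
    · rw [interior_Ici]
      intro x hx
      exact (hgderiv x hx).differentiableAt.differentiableWithinAt
    · rw [interior_Ici]
      intro x hx
      rw [(hgderiv x hx).deriv]
      have hxX : X < x := hx
      have hx0 : (0:ℝ) < x := lt_trans hX0 hxX
      have hfx : x * deriv b x / b x < c :=
        hX₀ x (le_of_lt (lt_of_le_of_lt (le_max_left _ _) hxX))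
      have hbx : 0 < b x := hbpos x hx0
      rw [sub_nonpos]
      rw [div_lt_iff₀ hbx] at hfx
      have hxinv : (0:ℝ) < x⁻¹ := inv_pos.mpr hx0
      have key : x * deriv b x ≤ c * b x := le_of_lt hfx
      have h6 : deriv b x ≤ c * b x * x⁻¹ := by
        calc deriv b x = x * deriv b x * x⁻¹ := by field_simp
          _ ≤ c * b x * x⁻¹ := mul_le_mul_of_nonneg_right key hxinv.le
      calc (b x)⁻¹ * deriv b x ≤ (b x)⁻¹ * (c * b x * x⁻¹) :=
            mul_le_mul_of_nonneg_left h6 (inv_pos.mpr hbx).le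
        _ = c * x⁻¹ := by field_simp
  -- now conclude
  have hC : ∀ x, X ≤ x → Real.log (b x) ≤ c * Real.log x + g X := by
    intro x hx
    have := hanti (Set.self_mem_Ici) (Set.mem_Ici.mpr hx) hx
    simp only [hg] at this ⊢
    linarith
  obtain ⟨C, hC2⟩ : ∃ C : ℝ, ∀ x, X ≤ x → Real.log (b x) ≤ c * Real.log x + C := ⟨g X, hC⟩
  have hlogtend := Real.tendsto_log_atTop
  have h2 : ∀ᶠ x in atTop, max 1 (2 * |C| / ε) ≤ Real.log x :=
    hlogtend.eventually_ge_atTop _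
  filter_upwards [h2, eventually_ge_atTop X] with x hlx hxX
  have hlog1 : (1:ℝ) ≤ Real.log x := le_trans (le_max_left _ _) hlx
  have hlogpos : (0:ℝ) < Real.log x := lt_of_lt_of_le one_pos hlog1
  have hCb : C / Real.log x ≤ ε / 2 := by
    have h3 : 2 * |C| / ε ≤ Real.log x := le_trans (le_max_right _ _) hlx
    have h4 : 2 * |C| ≤ ε * Real.log x := by
      rw [div_le_iff₀ hε] at h3; linarith [h3]
    have h5 : C ≤ |C| := le_abs_self _
    rw [div_le_iff₀ hlogpos]
    nlinarith
  have hfin := hC2 x hxX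
  calc Real.log (b x) / Real.log x ≤ (c * Real.log x + C) / Real.log x := by
        gcongr
    _ = c + C / Real.log x := by field_simp
    _ ≤ c + ε / 2 := by linarith
    _ = β + ε := by rw [hc]; ring
end

section
/- Let b : ℝ₊ → ℝ₊ be continuous with b(x) > 0 for x > 0, differentiable on (0,∞), and suppose limsup_{x→∞} (x·b'(x)/b(x)) = β < 1. Define B(x) = ∫₀ˣ b(u) du. Then there is a constant C < ∞ such that x²·b(x)² ≤ C·B(x)² + C for all x ≥ 0. -/
open Filter

/-- If `b : ℝ₊ → ℝ₊` is continuous, positive on `(0,∞)`, differentiable on `(0,∞)`, and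
`limsup_{x→∞} x b'(x)/b(x) = β < 1`, then with `B(x) = ∫₀ˣ b(u) du` there is a constant `C`
such that `x² b(x)² ≤ C B(x)² + C` for all `x ≥ 0`. -/
theorem stmt1 (b : ℝ → ℝ) (β : ℝ)
    (hb0 : ∀ x ≥ 0, 0 ≤ b x)
    (hbpos : ∀ x > 0, 0 < b x)
    (hcont : ContinuousOn b (Set.Ici 0))
    (hdiff : ∀ x > 0, DifferentiableAt ℝ b x)
    (hbdd : IsBoundedUnder (· ≤ ·) atTop (fun x => x * deriv b x / b x))
    (hβ : limsup (fun x => x * deriv b x / b x) atTop = β)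
    (hβ1 : β < 1) :
    ∃ C : ℝ, ∀ x ≥ 0, x ^ 2 * (b x) ^ 2 ≤ C * (∫ u in (0:ℝ)..x, b u) ^ 2 + C := by
  set γ : ℝ := (max β 0 + 1) / 2 with hγdef
  have hγ0 : 0 < γ := by
    have : (0:ℝ) ≤ max β 0 := le_max_right _ _
    simp only [hγdef]; linarith
  have hβγ : β < γ := by
    have h1 : β ≤ max β 0 := le_max_left _ _
    have h2 : max β 0 < 1 := max_lt hβ1 one_pos
    simp only [hγdef]; linarith
  -- eventual bound
  have hev : ∀ᶠ x in atTop, x * deriv b x / b x < γ :=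
    eventually_lt_of_limsup_lt (hβ ▸ hβγ) hbdd
  obtain ⟨x₁, hx₁⟩ := eventually_atTop.mp hev
  set x₀ : ℝ := max x₁ 1 with hx₀def
  have hx₀pos : (0:ℝ) < x₀ := lt_of_lt_of_le one_pos (le_max_right _ _)
  have hbound : ∀ x ≥ x₀, x * deriv b x ≤ γ * b x := by
    intro x hx
    have hxpos : 0 < x := lt_of_lt_of_le hx₀pos hx
    have hb : 0 < b x := hbpos x hxpos
    have := hx₁ x (le_trans (le_max_left _ _) hx)
    have := (div_lt_iff₀ hb).mp this
    linarith
  -- derivative of the primitive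
  have hBderiv : ∀ x > (0:ℝ), HasDerivAt (fun y => ∫ u in (0:ℝ)..y, b u) (b x) x := by
    intro x hx
    have hmem : Set.Ici (0:ℝ) ∈ nhds x := Ici_mem_nhds hx
    have hca : ContinuousAt b x := hcont.continuousAt hmem
    have hint : IntervalIntegrable b MeasureTheory.volume 0 x := by
      apply (hcont.mono ?_).intervalIntegrable
      rw [Set.uIcc_of_le hx.le]; exact Set.Icc_subset_Ici_self
    have hmeas : StronglyMeasurableAtFilter b (nhds x) :=
      (hcont.mono (Set.Ioi_subset_Ici le_rfl)).stronglyMeasurableAtFilter isOpen_Ioi x hx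
    exact intervalIntegral.integral_hasDerivAt_right hint hmeas hca
  set F : ℝ → ℝ := fun x => (1 + γ) * (∫ u in (0:ℝ)..x, b u) - x * b x with hFdef
  have hFderiv : ∀ x > (0:ℝ),
      HasDerivAt F ((1 + γ) * b x - (1 * b x + x * deriv b x)) x := by
    intro x hx
    exact ((hBderiv x hx).const_mul (1 + γ)).sub
      ((hasDerivAt_id x).mul ((hdiff x hx).hasDerivAt))
  have hmono : MonotoneOn F (Set.Ici x₀) := by
    apply monotoneOn_of_deriv_nonneg (convex_Ici x₀)
    · intro x hx
      exact ((hFderiv x (lt_of_lt_of_le hx₀pos hx)).continuousAt).continuousWithinAt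
    · rw [interior_Ici]
      intro x hx
      exact ((hFderiv x (lt_trans hx₀pos hx)).differentiableAt).differentiableWithinAt
    · rw [interior_Ici]
      intro x hx
      have hxpos : 0 < x := lt_trans hx₀pos hx
      rw [(hFderiv x hxpos).deriv]
      have h1 := hbound x hx.le
      linarith
  -- nonnegativity of the primitive
  have hBnn : ∀ x ≥ (0:ℝ), 0 ≤ ∫ u in (0:ℝ)..x, b u := by
    intro x hx
    apply intervalIntegral.integral_nonneg hx
    intro u hu
    exact hb0 u hu.1
  -- bound on the compact part
  obtain ⟨z, hz, hzmax⟩ := (isCompact_Icc (a := (0:ℝ)) (b := x₀)).exists_isMaxOn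
    ⟨0, le_rfl, hx₀pos.le⟩
    (continuousOn_id.mul (hcont.mono (fun y hy => hy.1)))
  set M : ℝ := max (z * b z) 0 with hMdef
  set K : ℝ := x₀ * b x₀ with hKdef
  have hK0 : 0 ≤ K := mul_nonneg hx₀pos.le (hb0 x₀ hx₀pos.le)
  refine ⟨2 * (1 + γ) ^ 2 + 2 * K ^ 2 + M ^ 2, ?_⟩
  intro x hx
  set Bx : ℝ := ∫ u in (0:ℝ)..x, b u with hBxdef
  have hBxnn : 0 ≤ Bx := hBnn x hx
  have hM0 : 0 ≤ M := le_max_right _ _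
  have hxbx : 0 ≤ x * b x := mul_nonneg hx (hb0 x hx)
  rcases le_or_gt x x₀ with hcase | hcase
  · -- compact part
    have hxM : x * b x ≤ M := le_trans (hzmax ⟨hx, hcase⟩) (le_max_left _ _)
    have h1 : x ^ 2 * (b x) ^ 2 = (x * b x) ^ 2 := by ring
    rw [h1]
    have h2 : (x * b x) ^ 2 ≤ M ^ 2 := pow_le_pow_left₀ hxbx hxM 2
    nlinarith [sq_nonneg Bx, sq_nonneg (1 + γ), sq_nonneg K, sq_nonneg M,
      mul_nonneg (by positivity : (0:ℝ) ≤ 2 * (1 + γ) ^ 2) (sq_nonneg Bx)]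
  · -- tail part
    have hFle : F x₀ ≤ F x := hmono (Set.self_mem_Ici) (Set.mem_Ici.mpr hcase.le) hcase.le
    have hBx₀nn : 0 ≤ ∫ u in (0:ℝ)..x₀, b u := hBnn x₀ hx₀pos.le
    have hkey : x * b x ≤ (1 + γ) * Bx + K := by
      simp only [hFdef] at hFle
      have h1γ : 0 ≤ 1 + γ := by linarith
      nlinarith [mul_nonneg h1γ hBx₀nn]
    have h1 : x ^ 2 * (b x) ^ 2 = (x * b x) ^ 2 := by ring
    rw [h1]
    have hrhs : 0 ≤ (1 + γ) * Bx + K := by positivity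
    have h2 : (x * b x) ^ 2 ≤ ((1 + γ) * Bx + K) ^ 2 := pow_le_pow_left₀ hxbx hkey 2
    nlinarith [sq_nonneg ((1 + γ) * Bx - K), sq_nonneg Bx, sq_nonneg M]
end

section
/- Let b : ℝ₊ → ℝ₊ be continuous with b(x) > 0 for x > 0, differentiable on (0,∞), with limsup_{x→∞} (x·b'(x)/b(x)) = β < 1. If B(x) = ∫₀ˣ b(u) du satisfies lim_{x→∞} B(x) < ∞, then b(x) = O(1/x) as x → ∞. -/
open Filter

/-- If `b : ℝ₊ → ℝ₊` is continuous, positive on `(0,∞)`, differentiable on `(0,∞)`,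
`limsup_{x→∞} x b'(x)/b(x) = β < 1`, and `B(x) = ∫₀ˣ b(u) du` is bounded (i.e. has a finite
limit at infinity), then `b(x) = O(1/x)` as `x → ∞`. -/
theorem stmt2 (b : ℝ → ℝ) (β : ℝ)
    (hb0 : ∀ x ≥ 0, 0 ≤ b x)
    (hbpos : ∀ x > 0, 0 < b x)
    (hcont : ContinuousOn b (Set.Ici 0))
    (hdiff : ∀ x > 0, DifferentiableAt ℝ b x)
    (hbdd : IsBoundedUnder (· ≤ ·) atTop (fun x => x * deriv b x / b x))
    (hβ : limsup (fun x => x * deriv b x / b x) atTop = β)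
    (hβ1 : β < 1)
    (hB : ∃ M : ℝ, ∀ x ≥ 0, (∫ u in (0:ℝ)..x, b u) ≤ M) :
    (fun x => b x) =O[atTop] (fun x => 1 / x) := by
  obtain ⟨M, hM⟩ := hB
  set g : ℝ := max ((β + 1) / 2) 0 with hgdef
  have hg1 : g < 1 := by
    apply max_lt <;> [linarith; norm_num]
  have hg0 : (0:ℝ) ≤ g := le_max_right _ _
  have hβg : β < g := lt_of_lt_of_le (by linarith) (le_max_left _ _)
  have hev : ∀ᶠ x in atTop, x * deriv b x / b x < g := by
    apply Filter.eventually_lt_of_limsup_lt _ hbdd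
    rw [hβ]; exact hβg
  obtain ⟨x₁, hx₁⟩ := Filter.eventually_atTop.mp hev
  set x₀ : ℝ := max x₁ 1 with hx₀def
  have hx₀pos : (0:ℝ) < x₀ := lt_of_lt_of_le one_pos (le_max_right _ _)
  have hx₀le : ∀ x ≥ x₀, x * deriv b x / b x < g := fun x hx =>
    hx₁ x (le_trans (le_max_left _ _) hx)
  -- the auxiliary function
  set f : ℝ → ℝ := fun t => g * Real.log t - Real.log (b t) with hfdef
  have hmono : MonotoneOn f (Set.Ici x₀) := by
    have hconvex : Convex ℝ (Set.Ici x₀) := convex_Ici x₀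
    apply monotoneOn_of_deriv_nonneg hconvex
    · apply ContinuousOn.sub
      · exact (Real.continuousOn_log.mono (fun t ht => ne_of_gt (lt_of_lt_of_le hx₀pos ht))).const_smul g
      · apply Real.continuousOn_log.comp (hcont.mono (fun t ht => le_of_lt (lt_of_lt_of_le hx₀pos ht)))
        intro t ht
        exact ne_of_gt (hbpos t (lt_of_lt_of_le hx₀pos ht))
    · rw [interior_Ici]
      intro t ht
      have htpos : (0:ℝ) < t := lt_trans hx₀pos ht
      have hbt : 0 < b t := hbpos t htpos
      apply DifferentiableAt.differentiableWithinAt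
      apply DifferentiableAt.sub
      · exact (Real.differentiableAt_log (ne_of_gt htpos)).const_mul g
      · exact (Real.differentiableAt_log (ne_of_gt hbt)).comp t (hdiff t htpos)
    · rw [interior_Ici]
      intro t ht
      have htpos : (0:ℝ) < t := lt_trans hx₀pos ht
      have hbt : 0 < b t := hbpos t htpos
      have hd1 : HasDerivAt (fun t => g * Real.log t) (g * t⁻¹) t :=
        (Real.hasDerivAt_log (ne_of_gt htpos)).const_mul g
      have hd2 : HasDerivAt (fun t => Real.log (b t)) ((b t)⁻¹ * deriv b t) t :=
        (Real.hasDerivAt_log (ne_of_gt hbt)).comp t (hdiff t htpos).hasDerivAt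
      have hdf : HasDerivAt f (g * t⁻¹ - (b t)⁻¹ * deriv b t) t := hd1.sub hd2
      rw [hdf.deriv]
      have hlt : t * deriv b t / b t < g := hx₀le t (le_of_lt ht)
      rw [div_lt_iff₀ hbt] at hlt
      rw [sub_nonneg]
      have h2' : deriv b t ≤ g * b t / t := by
        rw [le_div_iff₀ htpos]; nlinarith
      calc (b t)⁻¹ * deriv b t ≤ (b t)⁻¹ * (g * b t / t) :=
            mul_le_mul_of_nonneg_left h2' (by positivity)
        _ = g * t⁻¹ := by field_simp
  -- main bound: for x ≥ 2 x₀, x * b x ≤ 4 M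
  have hmain : ∀ x ≥ 2 * x₀, x * b x ≤ 4 * M := by
    intro x hx
    have hx2 : x / 2 ≥ x₀ := by linarith
    have hxpos : 0 < x := by linarith
    have hx2pos : 0 < x / 2 := by linarith
    have hbx : 0 < b x := hbpos x hxpos
    -- lower bound on b on [x/2, x]
    have hlow : ∀ s ∈ Set.Icc (x / 2) x, b x / 2 ≤ b s := by
      intro s hs
      have hspos : 0 < s := lt_of_lt_of_le hx2pos hs.1
      have hbs : 0 < b s := hbpos s hspos
      have hfs : f s ≤ f x :=
        hmono (Set.mem_Ici.mpr (le_trans hx2 hs.1))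
          (Set.mem_Ici.mpr (by linarith)) hs.2
      simp only [hfdef] at hfs
      have hlog : Real.log x - Real.log s ≤ Real.log 2 := by
        rw [← Real.log_div (ne_of_gt hxpos) (ne_of_gt hspos)]
        apply Real.log_le_log (by positivity)
        rw [div_le_iff₀ hspos]
        linarith [hs.1]
      have hlog2 : (0:ℝ) ≤ Real.log 2 := Real.log_nonneg (by norm_num)
      have key : Real.log (b x) - Real.log 2 ≤ Real.log (b s) := by
        have h1 : g * (Real.log x - Real.log s) ≤ Real.log 2 := by
          calc g * (Real.log x - Real.log s) ≤ 1 * (Real.log x - Real.log s) := by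
                apply mul_le_mul_of_nonneg_right (le_of_lt hg1)
                have : Real.log s ≤ Real.log x := Real.log_le_log hspos hs.2
                linarith
            _ = Real.log x - Real.log s := one_mul _
            _ ≤ Real.log 2 := hlog
        have hd := mul_sub g (Real.log x) (Real.log s)
        linarith
      have : Real.log (b x / 2) ≤ Real.log (b s) := by
        rw [Real.log_div (ne_of_gt hbx) (by norm_num)]
        exact key
      have := Real.exp_le_exp.mpr this
      rwa [Real.exp_log (by positivity), Real.exp_log hbs] at this
    -- integrability
    have hsub : Set.uIcc (x/2) x ⊆ Set.Ici (0:ℝ) := by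
      rw [Set.uIcc_of_le (by linarith)]
      intro t ht; exact le_trans (le_of_lt hx2pos) ht.1
    have hint : IntervalIntegrable b MeasureTheory.volume (x/2) x :=
      (hcont.mono hsub).intervalIntegrable
    have hsub0 : Set.uIcc (0:ℝ) (x/2) ⊆ Set.Ici (0:ℝ) := by
      rw [Set.uIcc_of_le (by linarith)]
      intro t ht; exact ht.1
    have hint0 : IntervalIntegrable b MeasureTheory.volume 0 (x/2) :=
      (hcont.mono hsub0).intervalIntegrable
    -- lower bound for integral
    have h1 : (x / 2) * (b x / 2) ≤ ∫ u in (x/2)..x, b u := by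
      have := intervalIntegral.integral_mono_on (by linarith : x/2 ≤ x)
        (intervalIntegrable_const : IntervalIntegrable (fun _ => b x / 2) MeasureTheory.volume (x/2) x)
        hint (fun s hs => hlow s hs)
      rwa [intervalIntegral.integral_const, smul_eq_mul, show x - x/2 = x/2 by ring] at this
    -- upper bound for integral
    have h2 : (∫ u in (x/2)..x, b u) ≤ M := by
      have hadd := intervalIntegral.integral_add_adjacent_intervals hint0 hint
      have hnn : 0 ≤ ∫ u in (0:ℝ)..(x/2), b u := by
        apply intervalIntegral.integral_nonneg (by linarith)
        intro u hu; exact hb0 u hu.1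
      have := hM x (le_of_lt hxpos)
      linarith
    nlinarith
  rw [Asymptotics.isBigO_iff]
  refine ⟨4 * M, ?_⟩
  filter_upwards [eventually_ge_atTop (2 * x₀), eventually_gt_atTop (0:ℝ)] with x hx hx0
  rw [Real.norm_eq_abs, Real.norm_eq_abs, abs_of_nonneg (hb0 x (le_of_lt hx0)),
    abs_of_nonneg (by positivity : (0:ℝ) ≤ 1 / x)]
  rw [show 4 * M * (1 / x) = 4 * M / x by ring, le_div_iff₀ hx0]
  nlinarith [hmain x hx]
end

section
/- Let b : ℝ₊ → ℝ₊ be continuous with b(x) > 0 for x > 0, differentiable on (0,∞), with limsup_{x→∞} (x·b'(x)/b(x)) = β < 1, and suppose B(x) = ∫₀ˣ b(u) du → ∞ as x → ∞. Then there exist δ ∈ (1,2) and C < ∞ such that b(x)² ≤ C·(1 + B(x)^{2−δ}) for all x ≥ 0. -/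
/-!
Choose `γ ∈ (max β 0, 1)`. Eventually `x b'(x) ≤ γ b(x)`, so `b(x) x^{-γ}` is eventually
non-increasing. Hence `b(x) ≲ x^γ`, and `b ≥ 2^{-γ} b(x)` on `[x/2, x]`, which gives
`B(x) ≳ x b(x) ≳ b(x)^{1 + 1/γ}`. Raising to the power `2γ/(1+γ)` bounds `b(x)²` by a multiple of
`B(x)^{2 - δ}` with `δ = 2/(1+γ)`; on the remaining compact interval `b` is bounded.
-/

open Filter Set

theorem antitoneOn_mul_rpow_neg_of_mul_deriv_le {f : ℝ → ℝ} {γ a : ℝ} (ha : 0 < a)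
    (hcont : ContinuousOn f (Ici a)) (hdiff : ∀ x > a, DifferentiableAt ℝ f x)
    (hder : ∀ x > a, x * deriv f x ≤ γ * f x) :
    AntitoneOn (fun x => f x * x ^ (-γ)) (Ici a) := by
  have hpow : ∀ x > 0, HasDerivAt (fun y : ℝ => y ^ (-γ)) (-γ * x ^ (-γ - 1)) x :=
    fun x hx => Real.hasDerivAt_rpow_const (Or.inl hx.ne')
  refine antitoneOn_of_deriv_nonpos (convex_Ici a) ?_ ?_ ?_
  · exact hcont.mul (continuousOn_id.rpow_const fun x hx => Or.inl (ha.trans_le hx).ne')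
  · rw [interior_Ici]
    exact fun x hx =>
      ((hdiff x hx).mul (hpow x (ha.trans hx)).differentiableAt).differentiableWithinAt
  · rw [interior_Ici]
    intro x (hx : a < x)
    have hx0 := ha.trans hx
    rw [((hdiff x hx).hasDerivAt.mul (hpow x hx0)).deriv (f := fun y => f y * y ^ (-γ)), Real.rpow_sub_one hx0.ne']
    calc _ = x ^ (-γ) / x * (x * deriv f x - γ * f x) := by field_simp; ring
      _ ≤ 0 := mul_nonpos_of_nonneg_of_nonpos (by positivity) (by linarith [hder x hx])

theorem mul_div_rpow_le_of_antitoneOn {f : ℝ → ℝ} {γ a : ℝ} (ha : 0 < a)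
    (hf : AntitoneOn (fun x => f x * x ^ (-γ)) (Ici a)) {u x : ℝ} (hau : a ≤ u) (hux : u ≤ x) :
    f x * (u / x) ^ γ ≤ f u := by
  have hu0 := ha.trans_le hau
  have hx0 := hu0.trans_le hux
  calc f x * (u / x) ^ γ = f x * x ^ (-γ) * u ^ γ := by
        rw [Real.div_rpow hu0.le hx0.le, Real.rpow_neg hx0.le]; ring
    _ ≤ f u * u ^ (-γ) * u ^ γ :=
        mul_le_mul_of_nonneg_right (hf hau (hau.trans hux) hux) (by positivity)
    _ = f u := by rw [mul_assoc, ← Real.rpow_add hu0, neg_add_cancel, Real.rpow_zero, mul_one]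

theorem sub_mul_le_integral_of_le {f : ℝ → ℝ} {c x m : ℝ} (hc : 0 ≤ c) (hcx : c ≤ x)
    (hf0 : ∀ u ≥ 0, 0 ≤ f u) (hcont : ContinuousOn f (Ici 0)) (hm : ∀ u ∈ Icc c x, m ≤ f u) :
    (x - c) * m ≤ ∫ u in 0..x, f u := by
  have hint : ∀ s t, 0 ≤ s → s ≤ t → IntervalIntegrable f MeasureTheory.volume s t :=
    fun s t hs hst => ContinuousOn.intervalIntegrable_of_Icc hst
      (hcont.mono fun u hu => hs.trans hu.1)
  rw [← intervalIntegral.integral_add_adjacent_intervals (hint 0 c le_rfl hc) (hint c x hc hcx)]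
  have h₁ : 0 ≤ ∫ u in 0..c, f u := intervalIntegral.integral_nonneg hc fun u hu => hf0 u hu.1
  have h₂ : (x - c) * m ≤ ∫ u in c..x, f u := by
    simpa using intervalIntegral.integral_mono_on hcx intervalIntegrable_const (hint c x hc hcx) hm
  linarith

theorem exists_rpow_le_mul_integral {b : ℝ → ℝ} {γ a : ℝ} (hγ : 0 < γ) (ha : 0 < a)
    (hb0 : ∀ x ≥ 0, 0 ≤ b x) (hcont : ContinuousOn b (Ici 0))
    (hanti : AntitoneOn (fun x => b x * x ^ (-γ)) (Ici a)) :
    ∃ c ≥ 0, ∀ x ≥ 2 * a, b x ^ (1 + γ⁻¹) ≤ c * ∫ u in 0..x, b u := by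
  have hba : 0 ≤ b a ^ γ⁻¹ := Real.rpow_nonneg (hb0 a ha.le) _
  refine ⟨b a ^ γ⁻¹ / a * 2 ^ (1 + γ), by positivity, fun x hx => ?_⟩
  have hx0 : 0 < x := by linarith
  have hbx := hb0 x hx0.le
  have hupper : b x ^ γ⁻¹ ≤ b a ^ γ⁻¹ / a * x := by
    have h := Real.rpow_le_rpow (by positivity)
      (mul_div_rpow_le_of_antitoneOn ha hanti le_rfl (by linarith : a ≤ x)) (inv_nonneg.2 hγ.le)
    rw [Real.mul_rpow hbx (by positivity), ← Real.rpow_mul (by positivity),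
      mul_inv_cancel₀ hγ.ne', Real.rpow_one] at h
    rw [div_mul_eq_mul_div, le_div_iff₀ ha]
    calc b x ^ γ⁻¹ * a = b x ^ γ⁻¹ * (a / x) * x := by field_simp
      _ ≤ b a ^ γ⁻¹ * x := by gcongr
  have hlower : x / 2 * ((2 ^ γ)⁻¹ * b x) ≤ ∫ u in 0..x, b u := by
    have h := sub_mul_le_integral_of_le (c := x / 2) (x := x) (m := (2 ^ γ)⁻¹ * b x) (by positivity : 0 ≤ x / 2)
      (by linarith) hb0 hcont fun u hu => ?_
    · rwa [sub_half] at h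
    calc (2 ^ γ)⁻¹ * b x = b x * (x / 2 / x) ^ γ := by
          rw [div_div_cancel_left' hx0.ne', Real.inv_rpow zero_le_two]; ring
      _ ≤ b x * (u / x) ^ γ := by gcongr; exact hu.1
      _ ≤ b u := mul_div_rpow_le_of_antitoneOn ha hanti (by linarith [hu.1]) hu.2
  calc b x ^ (1 + γ⁻¹) = b x ^ γ⁻¹ * b x := by
        rw [add_comm, Real.rpow_add' hbx (by positivity), Real.rpow_one]
    _ ≤ b a ^ γ⁻¹ / a * x * b x := by gcongr
    _ = b a ^ γ⁻¹ / a * 2 ^ (1 + γ) * (x / 2 * ((2 ^ γ)⁻¹ * b x)) := by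
        rw [Real.rpow_add zero_lt_two, Real.rpow_one]; field_simp
    _ ≤ _ := by gcongr

theorem rpow_le_mul_rpow_of_rpow_le_mul {y c B p q : ℝ} (hy : 0 ≤ y) (hc : 0 ≤ c) (hB : 0 ≤ B)
    (hp : 0 ≤ p) (hq : 0 < q) (h : y ^ q ≤ c * B) : y ^ p ≤ c ^ (p / q) * B ^ (p / q) := by
  calc y ^ p = (y ^ q) ^ (p / q) := by rw [← Real.rpow_mul hy, mul_div_cancel₀ p hq.ne']
    _ ≤ (c * B) ^ (p / q) := by gcongr
    _ = c ^ (p / q) * B ^ (p / q) := Real.mul_rpow hc hB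

theorem exists_sq_le_mul_one_add_integral_rpow {b : ℝ → ℝ} {q c x₁ : ℝ} (hq : 2 < q)
    (hb0 : ∀ x ≥ 0, 0 ≤ b x) (hcont : ContinuousOn b (Ici 0)) (hc0 : 0 ≤ c)
    (hc : ∀ x ≥ x₁, b x ^ q ≤ c * ∫ u in 0..x, b u) :
    ∃ δ ∈ Ioo (1:ℝ) 2, ∃ C : ℝ, ∀ x ≥ 0, b x ^ 2 ≤ C * (1 + (∫ u in 0..x, b u) ^ (2 - δ)) := by
  obtain ⟨M, hM⟩ := isCompact_Icc.exists_bound_of_continuousOn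
    (hcont.mono fun y hy => hy.1 : ContinuousOn b (Icc 0 x₁))
  refine ⟨2 - 2 / q, ⟨?_, ?_⟩, M ^ 2 + c ^ (2 / q), fun x hx => ?_⟩
  · linarith [(div_lt_one (by linarith)).2 hq]
  · linarith [div_pos two_pos (by linarith : (0 : ℝ) < q)]
  rw [sub_sub_cancel]
  have hB : 0 ≤ ∫ u in (0:ℝ)..x, b u := intervalIntegral.integral_nonneg hx fun u hu => hb0 u hu.1
  have hBq := Real.rpow_nonneg hB (2 / q)
  have hcq := Real.rpow_nonneg hc0 (2 / q)
  rcases le_or_gt x x₁ with hsmall | hlarge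
  · have hbM : b x ^ 2 ≤ M ^ 2 := pow_le_pow_left₀ (hb0 x hx)
      ((Real.le_norm_self _).trans (hM x ⟨hx, hsmall⟩)) 2
    nlinarith
  · have h := rpow_le_mul_rpow_of_rpow_le_mul (p := 2) (hb0 x hx) hc0 hB zero_le_two
      (by linarith) (hc x hlarge.le)
    rw [Real.rpow_two] at h
    nlinarith [sq_nonneg M]

theorem stmt3_general (b : ℝ → ℝ) (β : ℝ)
    (hb0 : ∀ x ≥ 0, 0 ≤ b x)
    (hbpos : ∀ x > 0, 0 < b x)
    (hcont : ContinuousOn b (Set.Ici 0))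
    (hdiff : ∀ x > 0, DifferentiableAt ℝ b x)
    (hbdd : IsBoundedUnder (· ≤ ·) atTop (fun x => x * deriv b x / b x))
    (hβ : limsup (fun x => x * deriv b x / b x) atTop = β)
    (hβ1 : β < 1) :
    ∃ δ ∈ Set.Ioo (1:ℝ) 2, ∃ C : ℝ,
      ∀ x ≥ 0, (b x) ^ 2 ≤ C * (1 + (∫ u in (0:ℝ)..x, b u) ^ (2 - δ)) := by
  obtain ⟨γ, hβγ, hγ1⟩ := exists_between (max_lt hβ1 one_pos)
  have hγ0 : 0 < γ := (le_max_right β 0).trans_lt hβγ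
  obtain ⟨a, ha⟩ := eventually_atTop.mp
    (eventually_lt_of_limsup_lt (hβ ▸ (le_max_left β 0).trans_lt hβγ) hbdd)
  have hx₀ : 0 < max a 1 := lt_max_of_lt_right one_pos
  have hder : ∀ x > max a 1, x * deriv b x ≤ γ * b x := fun x hx =>
    ((div_lt_iff₀ (hbpos x (hx₀.trans hx))).1 (ha x ((le_max_left a 1).trans hx.le))).le
  obtain ⟨c, hc0, hc⟩ := exists_rpow_le_mul_integral hγ0 hx₀ hb0 hcont
    (antitoneOn_mul_rpow_neg_of_mul_deriv_le hx₀ (hcont.mono fun y hy => hx₀.le.trans hy)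
      (fun x hx => hdiff x (hx₀.trans hx)) hder)
  exact exists_sq_le_mul_one_add_integral_rpow (by linarith [one_lt_inv₀ hγ0 |>.2 hγ1]) hb0 hcont
    hc0 hc

/-- If `b : ℝ₊ → ℝ₊` is continuous, positive on `(0,∞)`, differentiable on `(0,∞)`,
`limsup_{x→∞} x b'(x)/b(x) = β < 1`, and `B(x) = ∫₀ˣ b(u) du → ∞`, then there exist
`δ ∈ (1,2)` and `C < ∞` with `b(x)² ≤ C (1 + B(x)^{2-δ})` for all `x ≥ 0`. -/
theorem stmt3 (b : ℝ → ℝ) (β : ℝ)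
    (hb0 : ∀ x ≥ 0, 0 ≤ b x)
    (hbpos : ∀ x > 0, 0 < b x)
    (hcont : ContinuousOn b (Set.Ici 0))
    (hdiff : ∀ x > 0, DifferentiableAt ℝ b x)
    (hbdd : IsBoundedUnder (· ≤ ·) atTop (fun x => x * deriv b x / b x))
    (hβ : limsup (fun x => x * deriv b x / b x) atTop = β)
    (hβ1 : β < 1)
    (hB : Tendsto (fun x => ∫ u in (0:ℝ)..x, b u) atTop atTop) :
    ∃ δ ∈ Set.Ioo (1:ℝ) 2, ∃ C : ℝ,
      ∀ x ≥ 0, (b x) ^ 2 ≤ C * (1 + (∫ u in (0:ℝ)..x, b u) ^ (2 - δ)) :=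
  stmt3_general b β hb0 hbpos hcont hdiff hbdd hβ hβ1
end

section
/- Let b : ℝ₊ → ℝ₊ be continuous, positive on (0,∞), differentiable on (0,∞), with limsup_{x→∞} (x·b'(x)/b(x)) = β < 1 and B(x) = ∫₀ˣ b(u) du → ∞ as x → ∞. Then for every fixed ω ∈ ℝ, lim_{x→∞} B(x + ω·b(x)) / B(x) = 1. -/
set_option maxHeartbeats 1000000


open Filter

/-- If `b : ℝ₊ → ℝ₊` is continuous, positive on `(0,∞)`, differentiable on `(0,∞)`,
`limsup_{x→∞} x b'(x)/b(x) = β < 1`, and `B(x) = ∫₀ˣ b(u) du → ∞`, then for every fixed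
`ω ∈ ℝ`, `B(x + ω b(x))/B(x) → 1` as `x → ∞`. -/
theorem stmt4 (b : ℝ → ℝ) (β : ℝ) (ω : ℝ)
    (hb0 : ∀ x ≥ 0, 0 ≤ b x)
    (hbpos : ∀ x > 0, 0 < b x)
    (hcont : ContinuousOn b (Set.Ici 0))
    (hdiff : ∀ x > 0, DifferentiableAt ℝ b x)
    (hbdd : IsBoundedUnder (· ≤ ·) atTop (fun x => x * deriv b x / b x))
    (hβ : limsup (fun x => x * deriv b x / b x) atTop = β)
    (hβ1 : β < 1)
    (hB : Tendsto (fun x => ∫ u in (0:ℝ)..x, b u) atTop atTop) :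
    Tendsto (fun x => (∫ u in (0:ℝ)..(x + ω * b x), b u) / (∫ u in (0:ℝ)..x, b u))
      atTop (nhds 1) := by
  -- choose γ with max β 0 < γ < 1
  set γ : ℝ := (max β 0 + 1) / 2 with hγdef
  have hmax0 : (0:ℝ) ≤ max β 0 := le_max_right _ _
  have hmax1 : max β 0 < 1 := max_lt hβ1 one_pos
  have hγpos : 0 < γ := by rw [hγdef]; linarith
  have hγlt1 : γ < 1 := by rw [hγdef]; linarith
  have hβγ : β < γ := by
    have hβm : β ≤ max β 0 := le_max_left _ _
    rw [hγdef]; linarith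
  have hγ0 : 0 ≤ γ := hγpos.le
  -- eventual slope bound
  have hev : ∀ᶠ x in atTop, x * deriv b x / b x < γ :=
    eventually_lt_of_limsup_lt (by rw [hβ]; exact hβγ) hbdd
  obtain ⟨x₁, hx₁⟩ := eventually_atTop.mp hev
  set x₀ : ℝ := max x₁ 1 with hx₀def
  have hx₀1 : (1:ℝ) ≤ x₀ := le_max_right _ _
  have hx₀pos : (0:ℝ) < x₀ := lt_of_lt_of_le one_pos hx₀1
  have hslope : ∀ x ≥ x₀, x * deriv b x / b x < γ :=
    fun x hx => hx₁ x (le_trans (le_max_left _ _) hx)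
  have hbposOn : ∀ x ≥ x₀, 0 < b x := fun x hx => hbpos x (lt_of_lt_of_le hx₀pos hx)
  -- h = log b - γ log is antitone on [x₀, ∞)
  set h : ℝ → ℝ := fun x => Real.log (b x) - γ * Real.log x with hhdef
  have hderiv : ∀ x ∈ interior (Set.Ici x₀),
      HasDerivAt h (deriv b x / b x - γ * x⁻¹) x := by
    intro x hx
    rw [interior_Ici] at hx
    have hxpos : (0:ℝ) < x := lt_trans hx₀pos hx
    have hbx : 0 < b x := hbposOn x hx.le
    have hd1 : HasDerivAt (fun u => Real.log (b u)) (deriv b x / b x) x :=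
      ((hdiff x hxpos).hasDerivAt).log hbx.ne'
    have hd2 : HasDerivAt (fun u => γ * Real.log u) (γ * x⁻¹) x :=
      (Real.hasDerivAt_log hxpos.ne').const_mul γ
    exact hd1.sub hd2
  have hanti : AntitoneOn h (Set.Ici x₀) := by
    apply antitoneOn_of_deriv_nonpos (convex_Ici x₀)
    · apply ContinuousOn.sub
      · apply ContinuousOn.log
        · exact hcont.mono (fun u hu => le_trans hx₀pos.le hu)
        · intro u hu; exact (hbposOn u hu).ne'
      · apply ContinuousOn.mul continuousOn_const
        apply ContinuousOn.log continuousOn_id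
        intro u hu; exact (lt_of_lt_of_le hx₀pos hu).ne'
    · intro x hx
      exact (hderiv x hx).differentiableAt.differentiableWithinAt
    · intro x hx
      rw [(hderiv x hx).deriv]
      rw [interior_Ici] at hx
      have hxpos : (0:ℝ) < x := lt_trans hx₀pos hx
      have hbx : 0 < b x := hbposOn x hx.le
      have hs := hslope x hx.le
      rw [div_lt_iff₀ hbx] at hs
      have : deriv b x / b x ≤ γ / x := by
        rw [div_le_div_iff₀ hbx hxpos]; nlinarith
      have hγx : γ * x⁻¹ = γ / x := by ring
      linarith [hγx ▸ this]
  -- key comparison inequality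
  have key : ∀ u x : ℝ, x₀ ≤ u → u ≤ x → b x * u ^ γ ≤ b u * x ^ γ := by
    intro u x hu hux
    have hx : x₀ ≤ x := le_trans hu hux
    have h1 : h x ≤ h u := hanti (Set.mem_Ici.mpr hu) (Set.mem_Ici.mpr hx) hux
    have hupos : 0 < u := lt_of_lt_of_le hx₀pos hu
    have hxpos : 0 < x := lt_of_lt_of_le hx₀pos hx
    have hbu : 0 < b u := hbposOn u hu
    have hbx : 0 < b x := hbposOn x hx
    have h2 : Real.log (b x) + Real.log u * γ ≤ Real.log (b u) + Real.log x * γ := by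
      simp only [hhdef] at h1; nlinarith
    have h3 := Real.exp_le_exp.mpr h2
    rwa [Real.exp_add, Real.exp_add, Real.exp_log hbx, Real.exp_log hbu,
      ← Real.rpow_def_of_pos hupos, ← Real.rpow_def_of_pos hxpos] at h3
  -- upper bound b u ≤ K u^γ
  set K : ℝ := b x₀ / x₀ ^ γ with hKdef
  have hx₀γ : (0:ℝ) < x₀ ^ γ := Real.rpow_pos_of_pos hx₀pos γ
  have hKpos : 0 < K := div_pos (hbposOn x₀ le_rfl) hx₀γ
  have hKbound : ∀ u, x₀ ≤ u → b u ≤ K * u ^ γ := by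
    intro u hu
    have hk := key x₀ u le_rfl hu
    rw [hKdef, div_mul_eq_mul_div, le_div_iff₀ hx₀γ]
    linarith
  -- interval integrability
  have hInt : ∀ p q : ℝ, 0 ≤ p → 0 ≤ q → IntervalIntegrable b MeasureTheory.volume p q := by
    intro p q hp hq
    apply ContinuousOn.intervalIntegrable
    apply hcont.mono
    intro u hu
    exact le_trans (le_inf hp hq) hu.1
  -- lower bound on B
  have hBlow : ∀ x : ℝ, 2 * x₀ ≤ x →
      x / 2 * ((1/2:ℝ) ^ γ * b x) ≤ ∫ u in (0:ℝ)..x, b u := by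
    intro x hx
    have hxpos : (0:ℝ) < x := by linarith
    have hhalf : x₀ ≤ x / 2 := by linarith
    have hsplit : (∫ u in (0:ℝ)..(x/2), b u) + ∫ u in (x/2)..x, b u = ∫ u in (0:ℝ)..x, b u :=
      intervalIntegral.integral_add_adjacent_intervals
        (hInt 0 (x/2) le_rfl (by linarith)) (hInt (x/2) x (by linarith) hxpos.le)
    have h1 : 0 ≤ ∫ u in (0:ℝ)..(x/2), b u :=
      intervalIntegral.integral_nonneg (by linarith) (fun u hu => hb0 u hu.1)
    have hbx : 0 < b x := hbposOn x (by linarith)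
    have hxg : (0:ℝ) < x ^ γ := Real.rpow_pos_of_pos hxpos γ
    have hpt : ∀ u ∈ Set.Icc (x/2) x, (1/2:ℝ) ^ γ * b x ≤ b u := by
      intro u hu
      have hux₀ : x₀ ≤ u := le_trans hhalf hu.1
      have hk := key u x hux₀ hu.2
      have hrp : (x/2:ℝ) ^ γ ≤ u ^ γ := Real.rpow_le_rpow (by linarith) hu.1 hγ0
      have e1 : ((1:ℝ)/2) ^ γ = (x/2) ^ γ / x ^ γ := by
        rw [← Real.div_rpow (by linarith) hxpos.le]
        congr 1
        field_simp
      rw [e1, div_mul_eq_mul_div, div_le_iff₀ hxg]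
      nlinarith
    have h2 : x / 2 * ((1/2:ℝ) ^ γ * b x) ≤ ∫ u in (x/2)..x, b u := by
      have hc : ∫ u in (x/2)..x, ((1/2:ℝ) ^ γ * b x) = (x - x/2) * ((1/2:ℝ) ^ γ * b x) := by
        rw [intervalIntegral.integral_const, smul_eq_mul]
      have hm := intervalIntegral.integral_mono_on (by linarith : x/2 ≤ x)
        intervalIntegrable_const (hInt (x/2) x (by linarith) hxpos.le) hpt
      rw [hc] at hm
      nlinarith
    linarith
  -- tendsto of x^(γ-1)
  have hsm : Tendsto (fun x : ℝ => x ^ (γ - 1)) atTop (nhds 0) := by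
    have := tendsto_rpow_neg_atTop (show (0:ℝ) < 1 - γ by linarith)
    simpa [neg_sub] using this
  -- eventual smallness of |ω| b x relative to x
  have hev2 : ∀ᶠ x in atTop, |ω| * K * x ^ (γ - 1) ≤ 1/2 := by
    have h := hsm.const_mul (|ω| * K)
    rw [mul_zero] at h
    exact h.eventually_le_const (by norm_num)
  -- the main eventual bound
  set D : ℝ := |ω| * K * 2 ^ (2*γ + 1) with hDdef
  have main : ∀ᶠ x in atTop,
      ‖(∫ u in (0:ℝ)..(x + ω * b x), b u) / (∫ u in (0:ℝ)..x, b u) - 1‖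
        ≤ D * x ^ (γ - 1) := by
    filter_upwards [eventually_ge_atTop (2 * x₀), hev2] with x hx2 hxev
    have hxpos : (0:ℝ) < x := by linarith
    have hxx₀ : x₀ ≤ x := by linarith
    have hbx : 0 < b x := hbposOn x hxx₀
    have hbK : b x ≤ K * x ^ γ := hKbound x hxx₀
    have hxg : (0:ℝ) < x ^ γ := Real.rpow_pos_of_pos hxpos γ
    have hxgm : x ^ (γ - 1) = x ^ γ / x := by rw [Real.rpow_sub hxpos, Real.rpow_one]
    have hωb : |ω| * b x ≤ x / 2 := by
      have h1 : |ω| * b x ≤ |ω| * (K * x ^ γ) :=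
        mul_le_mul_of_nonneg_left hbK (abs_nonneg ω)
      have h2 : |ω| * K * x ^ (γ - 1) * x = |ω| * (K * x ^ γ) := by
        rw [hxgm]; field_simp
      nlinarith
    set y := x + ω * b x with hy
    have habs : |ω * b x| = |ω| * b x := by rw [abs_mul, abs_of_nonneg hbx.le]
    have hωb2 : -(x/2) ≤ ω * b x ∧ ω * b x ≤ x/2 := abs_le.mp (habs ▸ hωb)
    have hy1 : x / 2 ≤ y := by rw [hy]; linarith [hωb2.1]
    have hy2 : y ≤ 2 * x := by rw [hy]; linarith [hωb2.2]
    have hypos : 0 < y := by linarith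
    have hsplit : (∫ u in (0:ℝ)..x, b u) + ∫ u in x..y, b u = ∫ u in (0:ℝ)..y, b u :=
      intervalIntegral.integral_add_adjacent_intervals
        (hInt 0 x le_rfl hxpos.le) (hInt x y hxpos.le hypos.le)
    have hDlow := hBlow x hx2
    have hhalfγ : (0:ℝ) < (1/2:ℝ) ^ γ := Real.rpow_pos_of_pos (by norm_num) γ
    have hBxpos : 0 < ∫ u in (0:ℝ)..x, b u :=
      lt_of_lt_of_le (by positivity) hDlow
    have h2xγ : (0:ℝ) < (2*x) ^ γ := Real.rpow_pos_of_pos (by linarith) γ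
    -- bound on |∫ x..y b|
    have hIbnd : ‖∫ u in x..y, b u‖ ≤ (K * (2*x) ^ γ) * |y - x| := by
      apply intervalIntegral.norm_integral_le_of_norm_le_const
      intro u hu
      have hul : x / 2 ≤ u ∧ u ≤ 2 * x := by
        rcases Set.mem_uIoc.mp hu with ⟨hu1, hu2⟩ | ⟨hu1, hu2⟩
        · exact ⟨by linarith, by linarith⟩
        · exact ⟨by linarith, by linarith⟩
      have hux₀ : x₀ ≤ u := le_trans (by linarith) hul.1
      have hbu : b u ≤ K * u ^ γ := hKbound u hux₀
      have hrg : u ^ γ ≤ (2*x) ^ γ := Real.rpow_le_rpow (by linarith [hul.1]) hul.2 hγ0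
      rw [Real.norm_eq_abs, abs_of_nonneg (hb0 u (by linarith [hul.1]))]
      calc b u ≤ K * u ^ γ := hbu
        _ ≤ K * (2*x) ^ γ := mul_le_mul_of_nonneg_left hrg hKpos.le
    have hyx : |y - x| = |ω| * b x := by
      rw [hy]; ring_nf; rw [abs_mul, abs_of_nonneg hbx.le]; ring
    have hdiffeq : (∫ u in (0:ℝ)..y, b u) - (∫ u in (0:ℝ)..x, b u) = ∫ u in x..y, b u := by
      linarith
    have e1 : (∫ u in (0:ℝ)..y, b u) / (∫ u in (0:ℝ)..x, b u) - 1
        = (∫ u in x..y, b u) / (∫ u in (0:ℝ)..x, b u) := by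
      rw [← hdiffeq, sub_div, div_self hBxpos.ne']
    rw [Real.norm_eq_abs, e1, abs_div, abs_of_pos hBxpos]
    have goalstep : |∫ u in x..y, b u| / (∫ u in (0:ℝ)..x, b u)
        ≤ (K * (2*x) ^ γ * (|ω| * b x)) / (x / 2 * ((1/2:ℝ) ^ γ * b x)) := by
      apply div_le_div₀ (by positivity)
      · rw [← hyx]; simpa [Real.norm_eq_abs] using hIbnd
      · positivity
      · exact hDlow
    refine le_trans goalstep (le_of_eq ?_)
    -- algebraic identity
    have h2x : (2*x:ℝ) ^ γ = 2 ^ γ * x ^ γ := Real.mul_rpow (by norm_num) hxpos.le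
    have hinv : ((1:ℝ)/2) ^ γ * 2 ^ γ = 1 := by
      rw [← Real.mul_rpow (by norm_num) (by norm_num)]
      norm_num
    have h2g : (2:ℝ) ^ (2*γ + 1) = 2 ^ γ * 2 ^ γ * 2 := by
      rw [show 2*γ + 1 = γ + γ + 1 by ring, Real.rpow_add two_pos, Real.rpow_add two_pos,
        Real.rpow_one]
    have h2γpos : (0:ℝ) < (2:ℝ) ^ γ := Real.rpow_pos_of_pos two_pos γ
    have hhalfeq : ((1:ℝ)/2) ^ γ = ((2:ℝ) ^ γ)⁻¹ := by
      field_simp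
      linarith [hinv]
    rw [hDdef, h2x, hhalfeq, h2g, hxgm]
    field_simp
  have hzero : Tendsto
      (fun x => (∫ u in (0:ℝ)..(x + ω * b x), b u) / (∫ u in (0:ℝ)..x, b u) - 1)
      atTop (nhds 0) := by
    apply squeeze_zero_norm' main
    have := hsm.const_mul D
    simpa using this
  have := hzero.add (tendsto_const_nhds : Tendsto (fun _ : ℝ => (1:ℝ)) atTop (nhds 1))
  simpa using this
end

section
/- Let f : ℝ₊ → [0,∞] be continuous, where [0,∞] carries the topology of the one-point compactification of ℝ₊. Define E(f) = inf{t : f(t) = ∞} and, for x ∈ ℝ₊, S_x(f) = inf{t : f(t) ≥ x} (with inf ∅ = ∞, and where f(t) ≥ x includes f(t) = ∞). Then E(f) = lim_{x→∞} S_x(f), i.e., E(f) = sup_{x ∈ ℝ₊} S_x(f). -/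
/- If `c < E(f)`, then `f` is finite on the compact interval `[0, c]`, hence bounded there by
continuity, so `S_x(f) ≥ c` once `x` exceeds that bound. Conversely `S_x(f) ≤ E(f)` because
`f t = ∞` implies `f t ≥ x`. -/

open scoped ENNReal NNReal

theorem IsCompact.exists_eq_top_of_forall_exists_le {X : Type*} [TopologicalSpace X]
    {K : Set X} (hK : IsCompact K) {f : X → ℝ≥0∞} (hf : ContinuousOn f K)
    (h : ∀ x : ℝ≥0, ∃ t ∈ K, (x : ℝ≥0∞) ≤ f t) : ∃ t ∈ K, f t = ∞ := by
  obtain ⟨t₀, ht₀K, -⟩ := h 0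
  obtain ⟨t, htK, hmax⟩ := hK.exists_isMaxOn ⟨t₀, ht₀K⟩ hf
  refine ⟨t, htK, ENNReal.eq_top_of_forall_nnreal_le fun x => ?_⟩
  obtain ⟨s, hsK, hxs⟩ := h x
  exact hxs.trans (hmax hsK)

theorem biInf_eq_top_le_of_forall_biInf_le_lt {f : ℝ≥0 → ℝ≥0∞} (hf : Continuous f) (c : ℝ≥0)
    (hc : ∀ x : ℝ≥0, ⨅ t ∈ {t : ℝ≥0 | (x : ℝ≥0∞) ≤ f t}, (t : ℝ≥0∞) < c) :
    ⨅ t ∈ {t : ℝ≥0 | f t = ∞}, (t : ℝ≥0∞) ≤ c := by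
  have hreach : ∀ x : ℝ≥0, ∃ t ∈ Set.Icc 0 c, (x : ℝ≥0∞) ≤ f t := fun x => by
    obtain ⟨t, hxt, htc⟩ := by simpa only [iInf_lt_iff] using hc x
    exact ⟨t, ⟨zero_le, by exact_mod_cast htc.le⟩, hxt⟩
  obtain ⟨t, htc, hft⟩ := isCompact_Icc.exists_eq_top_of_forall_exists_le hf.continuousOn hreach
  exact (iInf₂_le t hft).trans (by exact_mod_cast htc.2)

/-- Let `f : ℝ₊ → [0,∞]` be a continuous path into the one-point compactification `[0,∞]`
of `ℝ₊`. With `E(f) = inf {t : f(t) = ∞}` and `S_x(f) = inf {t : f(t) ≥ x}` (both with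
`inf ∅ = ∞`), one has `E(f) = lim_{x→∞} S_x(f) = sup_x S_x(f)`. -/
theorem stmt12 (f : ℝ≥0 → ℝ≥0∞) (hf : Continuous f) :
    (⨅ t ∈ {t : ℝ≥0 | f t = ∞}, (t : ℝ≥0∞)) =
      ⨆ x : ℝ≥0, ⨅ t ∈ {t : ℝ≥0 | (x : ℝ≥0∞) ≤ f t}, (t : ℝ≥0∞) := by
  refine le_antisymm (le_of_forall_gt_imp_ge_of_dense fun c hc => ?_) ?_
  · obtain ⟨d, hd, hdc⟩ := ENNReal.lt_iff_exists_nnreal_btwn.mp hc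
    exact (biInf_eq_top_le_of_forall_biInf_le_lt hf d fun x => (le_iSup _ x).trans_lt hd).trans
      hdc.le
  · exact iSup_le fun x => biInf_mono fun t (ht : f t = ∞) =>
      show (x : ℝ≥0∞) ≤ f t from ht ▸ le_top
end
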